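/- arXiv:q-alg/9505013 — 7 statements merged into one kernel-verified Lean document; each statement's English description precedes it below -/
import Mathlib

section
/- For all integers r ≥ 2, all integers N ≥ 1, all integers n ≥ 1, and all complex numbers z, ∑_{m=1}^{r+1} C(N-n, r-m) C(z,m) - ∑_{k=1}^{N} [ g_r(z+k-1, n) - g_r(k-1, n) ] = g_{r+1}(z, n), where g_r(z,n) := ∑_{m=1}^{r-1} (-1)^{m-1} C(z, r-m) C(n+m-2, m-1) and C denotes generalized binomial coefficients. -/
open Finset Filter Topology

/-- Generalized binomial coefficient C(z,k) = z(z-1)⋯(z-k+1)/k!. -/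
noncomputable def genBinom (z : ℂ) (k : ℕ) : ℂ :=
  (∏ i ∈ Finset.range k, (z - i)) / (Nat.factorial k)

/-- g_r(z,n) = ∑_{m=1}^{r-1} (-1)^{m-1} C(z, r-m) C(n+m-2, m-1), with g_1 = 0. -/
noncomputable def qg (r : ℕ) (z : ℂ) (n : ℕ) : ℂ :=
  ∑ m ∈ Finset.Icc 1 (r - 1),
    (-1 : ℂ) ^ (m - 1) * genBinom z (r - m) * (Nat.choose (n + m - 2) (m - 1))

/-- Generalized binomial coefficient with integer index, zero for negative index. -/
noncomputable def genBinomZ (w : ℂ) (k : ℤ) : ℂ :=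
  if k < 0 then 0 else genBinom w k.toNat

lemma descPoch_smeval (z : ℂ) : ∀ k : ℕ,
    Polynomial.smeval (descPochhammer ℤ k) z = ∏ i ∈ Finset.range k, (z - i)
  | 0 => by simp [descPochhammer_zero, Polynomial.smeval_one]
  | (k+1) => by
    rw [descPochhammer_succ_right, Polynomial.smeval_mul, descPoch_smeval z k,
      Finset.prod_range_succ]
    congr 1
    simp [Polynomial.smeval_sub, Polynomial.smeval_X, Polynomial.smeval_natCast]

lemma genBinom_eq_choose (z : ℂ) (k : ℕ) : genBinom z k = Ring.choose z k := by
  have h := Ring.descPochhammer_eq_factorial_smul_choose z k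
  rw [descPoch_smeval] at h
  rw [genBinom, h, nsmul_eq_mul, mul_comm, mul_div_assoc,
    div_self (by exact_mod_cast k.factorial_ne_zero), mul_one]

lemma genBinom_zero (z : ℂ) : genBinom z 0 = 1 := by simp [genBinom]

lemma genBinom_pascal (x : ℂ) (k : ℕ) :
    genBinom (x + 1) (k + 1) = genBinom x (k + 1) + genBinom x k := by
  simp only [genBinom_eq_choose, Ring.choose_succ_succ]
  ring

lemma genBinom_vandermonde (x y : ℂ) (k : ℕ) :
    genBinom (x + y) k = ∑ j ∈ Finset.range (k + 1), genBinom x j * genBinom y (k - j) := by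
  simp only [genBinom_eq_choose]
  rw [Ring.add_choose_eq k (Commute.all x y),
    Finset.Nat.sum_antidiagonal_eq_sum_range_succ_mk]

lemma prod_nat_cast (n : ℕ) : ∀ j : ℕ,
    (∏ i ∈ Finset.range j, ((n : ℂ) + i)) = (n.ascFactorial j : ℂ)
  | 0 => by simp
  | (j+1) => by
    rw [Finset.prod_range_succ, prod_nat_cast n j, Nat.ascFactorial_succ]
    push_cast; ring

lemma genBinom_neg_nat (n j : ℕ) :
    genBinom (-(n : ℂ)) j = (-1) ^ j * ((n + j - 1).choose j : ℂ) := by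
  rw [genBinom]
  have h1 : ∀ i ∈ Finset.range j, -(n : ℂ) - (i : ℂ) = (-1) * ((n : ℂ) + i) := by
    intro i _; ring
  rw [Finset.prod_congr rfl h1, Finset.prod_mul_distrib, Finset.prod_const,
    Finset.card_range, prod_nat_cast, Nat.ascFactorial_eq_factorial_mul_choose']
  push_cast
  rw [mul_div_assoc, mul_comm ((j.factorial : ℂ)), mul_div_assoc,
    div_self (by exact_mod_cast j.factorial_ne_zero), mul_one]

lemma qg_closed (r n : ℕ) (hr : 1 ≤ r) (hn : 1 ≤ n) (z : ℂ) :
    qg r z n = genBinom (z - (n : ℂ)) (r - 1) - genBinom (-(n : ℂ)) (r - 1) := by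
  have hterm : ∀ m ∈ Finset.Icc 1 (r - 1),
      (-1 : ℂ) ^ (m - 1) * genBinom z (r - m) * ((n + m - 2).choose (m - 1) : ℂ)
        = genBinom z (r - m) * genBinom (-(n : ℂ)) (m - 1) := by
    intro m hm
    simp only [Finset.mem_Icc] at hm
    rw [genBinom_neg_nat]
    have e : n + (m - 1) - 1 = n + m - 2 := by omega
    rw [e]; ring
  rw [qg, Finset.sum_congr rfl hterm]
  have hI : Finset.Icc 1 (r - 1) = Finset.Ico 1 r := by
    rw [← Finset.Ico_add_one_right_eq_Icc]; congr 1; omega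
  rw [hI, Finset.sum_Ico_eq_sum_range]
  have hidx : ∀ i ∈ Finset.range (r - 1),
      genBinom z (r - (1 + i)) * genBinom (-(n : ℂ)) (1 + i - 1)
        = genBinom (-(n : ℂ)) i * genBinom z ((r - 1) - i) := by
    intro i hi
    simp only [Finset.mem_range] at hi
    have e1 : r - (1 + i) = (r - 1) - i := by omega
    have e2 : 1 + i - 1 = i := by omega
    rw [e1, e2, mul_comm]
  rw [Finset.sum_congr rfl hidx]
  have hv := genBinom_vandermonde (-(n : ℂ)) z (r - 1)
  rw [Finset.sum_range_succ, Nat.sub_self, genBinom_zero, mul_one] at hv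
  have hz : -(n : ℂ) + z = z - n := by ring
  rw [hz] at hv
  rw [hv]; ring

lemma telescope (w : ℂ) (r : ℕ) (hr : 1 ≤ r) : ∀ N : ℕ,
    ∑ k ∈ Finset.Icc 1 N, genBinom (w + (k : ℂ) - 1) (r - 1)
      = genBinom (w + N) r - genBinom w r
  | 0 => by simp
  | (N+1) => by
    rw [Finset.sum_Icc_succ_top (by omega), telescope w r hr N]
    have hp := genBinom_pascal (w + N) (r - 1)
    have h1 : (r - 1) + 1 = r := by omega
    rw [h1] at hp
    push_cast
    rw [show w + ((N : ℂ) + 1) - 1 = w + N by ring,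
      show w + ((N : ℂ) + 1) = (w + N) + 1 by ring, hp]
    ring

theorem stmt3 (r N n : ℕ) (hr : 2 ≤ r) (hN : 1 ≤ N) (hn : 1 ≤ n) (z : ℂ) :
    ∑ m ∈ Finset.Icc 1 (r + 1), genBinomZ ((N : ℂ) - n) ((r : ℤ) - m) * genBinom z m
      - ∑ k ∈ Finset.Icc 1 N, (qg r (z + k - 1) n - qg r ((k : ℂ) - 1) n)
      = qg (r + 1) z n := by
  have hS1 : ∑ m ∈ Finset.Icc 1 (r + 1), genBinomZ ((N : ℂ) - n) ((r : ℤ) - m) * genBinom z m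
      = genBinom (z + ((N : ℂ) - n)) r - genBinom ((N : ℂ) - n) r := by
    rw [Finset.sum_Icc_succ_top (by omega)]
    have htop : genBinomZ ((N : ℂ) - n) ((r : ℤ) - (r + 1 : ℕ)) = 0 := by
      rw [genBinomZ, if_pos (by push_cast; omega)]
    rw [htop, zero_mul, add_zero]
    have hconv : ∀ m ∈ Finset.Icc 1 r,
        genBinomZ ((N : ℂ) - n) ((r : ℤ) - m) * genBinom z m
          = genBinom z m * genBinom ((N : ℂ) - n) (r - m) := by
      intro m hm
      simp only [Finset.mem_Icc] at hm
      rw [genBinomZ, if_neg (by push_cast; omega)]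
      have e : ((r : ℤ) - m).toNat = r - m := by omega
      rw [e, mul_comm]
    rw [Finset.sum_congr rfl hconv]
    have hv := genBinom_vandermonde z ((N : ℂ) - n) r
    rw [Finset.sum_range_succ', genBinom_zero, one_mul, Nat.sub_zero] at hv
    have hI : Finset.Icc 1 r = Finset.Ico 1 (r + 1) := (Finset.Ico_add_one_right_eq_Icc 1 r).symm
    rw [hI, Finset.sum_Ico_eq_sum_range]
    have hsum : ∑ k ∈ Finset.range (r + 1 - 1), genBinom z (1 + k) * genBinom ((N : ℂ) - n) (r - (1 + k))
        = ∑ k ∈ Finset.range r, genBinom z (k + 1) * genBinom ((N : ℂ) - n) (r - (k + 1)) := by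
      apply Finset.sum_congr (by norm_num)
      intro i _
      rw [add_comm 1 i]
    rw [hsum, hv]; ring
  have hS2 : ∑ k ∈ Finset.Icc 1 N, (qg r (z + k - 1) n - qg r ((k : ℂ) - 1) n)
      = (genBinom ((z - n) + N) r - genBinom (z - (n : ℂ)) r)
        - (genBinom ((-(n : ℂ)) + N) r - genBinom (-(n : ℂ)) r) := by
    have hterm : ∀ k ∈ Finset.Icc 1 N, qg r (z + k - 1) n - qg r ((k : ℂ) - 1) n
        = genBinom ((z - n) + (k : ℂ) - 1) (r - 1) - genBinom ((-(n : ℂ)) + (k : ℂ) - 1) (r - 1) := by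
      intro k _
      rw [qg_closed r n (by omega) hn, qg_closed r n (by omega) hn,
        show z + k - 1 - (n : ℂ) = (z - n) + (k : ℂ) - 1 by ring,
        show (k : ℂ) - 1 - n = (-(n : ℂ)) + (k : ℂ) - 1 by ring]
      ring
    rw [Finset.sum_congr rfl hterm, Finset.sum_sub_distrib,
      telescope (z - n) r (by omega) N, telescope (-(n : ℂ)) r (by omega) N]
  rw [hS1, hS2, qg_closed (r + 1) n (by omega) hn, show r + 1 - 1 = r from rfl,
    show z + ((N : ℂ) - n) = (z - n) + N by ring,
    show (-(n : ℂ)) + N = (N : ℂ) - n by ring]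
  ring
end

section
/- Let 0 < q < 1 and r ≥ 2 an integer. For every complex z with Re z > 0, the infinite product ∏_{n=1}^{∞} ( (1-q^{z+n})/(1-q^n) )^{(-1)^r C(n+r-2,r-1)} (1-q^n)^{g_r(z,n)} converges absolutely (i.e., the sum of logarithms converges absolutely). -/
open Finset Filter Topology

/-!
Once `q ^ (n + 1) ≤ 1 / 8`, both logarithms are `O(q ^ n)`, since `log (1 + w) = O(w)` for small `w`
and `‖q ^ (z + n + 1)‖ ≤ q ^ (n + 1)` when `0 ≤ re z`. Their coefficients, the binomial coefficient
and `g_r(z, n + 1)`, grow at most like `(n + 1) ^ (r - 1)`, so the terms are dominated by the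
summable sequence `(n + 1) ^ (r - 1) * q ^ (n + 1)`.
-/

theorem Nat.choose_add_one_add_sub_two_le (n k : ℕ) :
    (n + 1 + k - 2).choose (k - 1) ≤ (n + 1) ^ (k - 1) := by
  rcases k with _ | k
  · simp
  · simpa [show n + 1 + (k + 1) - 2 = n + k by omega] using Nat.choose_add_le_add_one_pow n k

theorem Complex.norm_log_one_sub_div_one_sub_le {u v : ℂ} {t : ℝ} (hu : ‖u‖ ≤ t) (hv : ‖v‖ ≤ t)
    (ht : t ≤ 1 / 8) : ‖log ((1 - u) / (1 - v))‖ ≤ 6 * t := by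
  have hden : 1 / 2 ≤ ‖1 - v‖ := by
    have := norm_sub_norm_le (1 : ℂ) v
    rw [norm_one] at this
    linarith
  have hv1 : (1 : ℂ) - v ≠ 0 := norm_pos_iff.mp (by linarith)
  have hw : ‖(v - u) / (1 - v)‖ ≤ 4 * t := by
    rw [norm_div, div_le_iff₀ (by linarith)]
    have ht0 : 0 ≤ t := (norm_nonneg u).trans hu
    nlinarith [norm_sub_le v u]
  have hquot : (1 - u) / (1 - v) = 1 + (v - u) / (1 - v) := by field_simp; ring
  rw [hquot]
  linarith [norm_log_one_add_half_le_self (z := (v - u) / (1 - v)) (by linarith)]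

theorem Complex.norm_ofReal_cpow_le_pow {q : ℝ} (hq : 0 < q) (hq1 : q ≤ 1) {w : ℂ} {n : ℕ}
    (hn : (n : ℝ) ≤ w.re) : ‖(q : ℂ) ^ w‖ ≤ q ^ n := by
  rw [norm_cpow_eq_rpow_re_of_pos hq, ← Real.rpow_natCast]
  exact Real.rpow_le_rpow_of_exponent_ge hq hq1 hn

theorem norm_qg_le (r : ℕ) (z : ℂ) (n : ℕ) :
    ‖qg r z (n + 1)‖ ≤ (∑ m ∈ Icc 1 (r - 1), ‖genBinom z (r - m)‖) * ((n : ℝ) + 1) ^ (r - 1) := by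
  rw [qg, sum_mul]
  refine (norm_sum_le _ _).trans (sum_le_sum fun m hm => ?_)
  have hchoose : ((n + 1 + m - 2).choose (m - 1) : ℝ) ≤ ((n : ℝ) + 1) ^ (r - 1) := by
    calc ((n + 1 + m - 2).choose (m - 1) : ℝ) ≤ ((n : ℝ) + 1) ^ (m - 1) := by
          exact_mod_cast Nat.choose_add_one_add_sub_two_le n m
      _ ≤ ((n : ℝ) + 1) ^ (r - 1) :=
          pow_le_pow_right₀ (by linarith [n.cast_nonneg (α := ℝ)]) (by rw [mem_Icc] at hm; omega)
  rw [norm_mul, norm_mul, norm_pow, norm_neg, norm_one, one_pow, one_mul, Complex.norm_natCast]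
  gcongr

theorem norm_log_product_term_le {q : ℝ} (hq : 0 < q) (hq1 : q < 1) (r : ℕ) {z : ℂ} (hz : 0 ≤ z.re)
    {n : ℕ} (hn : q ^ (n + 1) ≤ 1 / 8) :
    ‖(-1 : ℂ) ^ r * (Nat.choose (n + 1 + r - 2) (r - 1)) *
          Complex.log ((1 - (q : ℂ) ^ (z + n + 1)) / (1 - (q : ℂ) ^ (n + 1)))
        + qg r z (n + 1) * Complex.log (1 - (q : ℂ) ^ (n + 1))‖
      ≤ (6 + 3 / 2 * ∑ m ∈ Icc 1 (r - 1), ‖genBinom z (r - m)‖) *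
          (((n : ℝ) + 1) ^ (r - 1) * q ^ (n + 1)) := by
  have hqn : ‖(q : ℂ) ^ (n + 1)‖ = q ^ (n + 1) := by
    rw [norm_pow, Complex.norm_real, Real.norm_of_nonneg hq.le]
  have hqz : ‖(q : ℂ) ^ (z + n + 1)‖ ≤ q ^ (n + 1) :=
    Complex.norm_ofReal_cpow_le_pow hq hq1.le (by simpa using hz)
  have hlog₁ := Complex.norm_log_one_sub_div_one_sub_le hqz hqn.le hn
  have hlog₂ : ‖Complex.log (1 - (q : ℂ) ^ (n + 1))‖ ≤ 3 / 2 * q ^ (n + 1) := by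
    have h := Complex.norm_log_one_add_half_le_self (z := -(q : ℂ) ^ (n + 1))
      (by rw [norm_neg, hqn]; linarith)
    rwa [norm_neg, hqn, ← sub_eq_add_neg] at h
  have hchoose : ((n + 1 + r - 2).choose (r - 1) : ℝ) ≤ ((n : ℝ) + 1) ^ (r - 1) := by
    exact_mod_cast Nat.choose_add_one_add_sub_two_le n r
  refine (norm_add_le _ _).trans ?_
  rw [norm_mul, norm_mul, norm_mul, norm_pow, norm_neg, norm_one, one_pow, one_mul,
    Complex.norm_natCast]
  have := mul_le_mul hchoose hlog₁ (norm_nonneg _) (by positivity)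
  have := mul_le_mul (norm_qg_le r z n) hlog₂ (norm_nonneg _) (by positivity)
  linarith

theorem stmt5_general (q : ℝ) (hq : 0 < q) (hq1 : q < 1) (r : ℕ) (z : ℂ) (hz : 0 < z.re) :
    Summable (fun n : ℕ =>
      ‖(-1 : ℂ) ^ r * (Nat.choose (n + 1 + r - 2) (r - 1)) *
          Complex.log ((1 - (q : ℂ) ^ (z + n + 1)) / (1 - (q : ℂ) ^ (n + 1)))
        + qg r z (n + 1) * Complex.log (1 - (q : ℂ) ^ (n + 1))‖) := by
  have hsmall : ∀ᶠ n : ℕ in atTop, q ^ (n + 1) ≤ 1 / 8 :=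
    ((tendsto_pow_atTop_nhds_zero_of_lt_one hq.le hq1).comp (tendsto_add_atTop_nat 1)).eventually
      (ge_mem_nhds (by norm_num))
  have hgeom : Summable fun n : ℕ => ((n : ℝ) + 1) ^ (r - 1) * q ^ (n + 1) := by
    have := summable_pow_mul_geometric_of_norm_lt_one (r - 1)
      (by rwa [Real.norm_of_nonneg hq.le] : ‖q‖ < 1)
    simpa using (summable_nat_add_iff 1).mpr this
  refine .of_norm_bounded_eventually_nat
    (hgeom.mul_left (6 + 3 / 2 * ∑ m ∈ Icc 1 (r - 1), ‖genBinom z (r - m)‖)) ?_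
  filter_upwards [hsmall] with n hn
  rw [norm_norm]
  exact norm_log_product_term_le hq hq1 r hz.le hn

theorem stmt5 (q : ℝ) (hq : 0 < q) (hq1 : q < 1) (r : ℕ) (hr : 2 ≤ r) (z : ℂ) (hz : 0 < z.re) :
    Summable (fun n : ℕ =>
      ‖(-1 : ℂ) ^ r * (Nat.choose (n + 1 + r - 2) (r - 1)) *
          Complex.log ((1 - (q : ℂ) ^ (z + n + 1)) / (1 - (q : ℂ) ^ (n + 1)))
        + qg r z (n + 1) * Complex.log (1 - (q : ℂ) ^ (n + 1))‖) :=
  stmt5_general q hq hq1 r z hz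
end

section
/- Let 0 < q < 1 and r ≥ 1. For real x ≥ 0, the (r+1)-st derivative of log G_r(x+1;q) equals (-log q)^{r+1} ∑_{n=1}^{∞} ∑_{k=1}^{∞} C(n+r-2, r-1) k^r q^{(x+n)k}, which is nonnegative. -/
open Finset Filter Topology

/-- Real generalized binomial coefficient C(x,k) = x(x-1)⋯(x-k+1)/k!. -/
noncomputable def binomR (x : ℝ) (k : ℕ) : ℝ :=
  (∏ i ∈ Finset.range k, (x - i)) / (Nat.factorial k)

/-- Real version of g_r(x,n). -/
noncomputable def qgR (r : ℕ) (x : ℝ) (n : ℕ) : ℝ :=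
  ∑ m ∈ Finset.Icc 1 (r - 1),
    (-1 : ℝ) ^ (m - 1) * binomR x (r - m) * (Nat.choose (n + m - 2) (m - 1))

/-- `logQG q r x = log G_r(x+1; q)`:
`-C(x,r) log(1-q) + ∑_{n≥1} [(-1)^r C(n+r-2,r-1) log((1-q^{x+n})/(1-q^n)) + g_r(x,n) log(1-q^n)]`. -/
noncomputable def logQG (q : ℝ) (r : ℕ) (x : ℝ) : ℝ :=
  -(binomR x r) * Real.log (1 - q) +
    ∑' n : ℕ,
      ((-1 : ℝ) ^ r * (Nat.choose (n + 1 + r - 2) (r - 1)) *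
          Real.log ((1 - q ^ (x + n + 1)) / (1 - q ^ ((n : ℝ) + 1)))
        + qgR r x (n + 1) * Real.log (1 - q ^ ((n : ℝ) + 1)))

/-!
For `y > -1/2`, expanding `log (1 - q ^ (y + n + 1)) = -∑ₖ q ^ ((y + n + 1)(k + 1)) / (k + 1)` writes
`log G_r(y + 1; q)` as a polynomial of degree at most `r` in `y` (coming from the binomial
coefficients `C(y, ·)` and the `y`-independent series) plus `(-1)^(r+1)` times a double series of
exponentials `exp ((k + 1) y log q)`. Every derivative of that series is dominated by its value at
`y = -1/2`, so it can be differentiated termwise; the `(r+1)`-st derivative kills the polynomial and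
leaves a series of nonnegative terms.
-/

open Polynomial Real

lemma abs_mul_pow_mul_exp_le {a μ c y : ℝ} (j : ℕ) (hμ : μ ≤ 0) (hy : c ≤ y) :
    |a * μ ^ j * exp (μ * y)| ≤ |a| * |μ| ^ j * exp (μ * c) := by
  rw [abs_mul, abs_mul, abs_pow, abs_exp]
  exact mul_le_mul_of_nonneg_left (exp_le_exp.2 (mul_le_mul_of_nonpos_left hy hμ))
    (by positivity)

section ExpSeries

variable {ι : Type*} {a μ : ι → ℝ} {c : ℝ}

lemma summable_mul_pow_mul_exp (hμ : ∀ i, μ i ≤ 0) {j : ℕ}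
    (hs : Summable fun i => |a i| * |μ i| ^ j * exp (μ i * c)) {y : ℝ} (hy : c ≤ y) :
    Summable fun i => a i * μ i ^ j * exp (μ i * y) :=
  hs.of_norm_bounded fun i => abs_mul_pow_mul_exp_le j (hμ i) hy

lemma hasDerivAt_tsum_mul_pow_mul_exp (hμ : ∀ i, μ i ≤ 0)
    (hs : ∀ j, Summable fun i => |a i| * |μ i| ^ j * exp (μ i * c)) (j : ℕ) {y : ℝ}
    (hy : c < y) :
    HasDerivAt (fun z => ∑' i, a i * μ i ^ j * exp (μ i * z))
      (∑' i, a i * μ i ^ (j + 1) * exp (μ i * y)) y := by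
  refine hasDerivAt_tsum_of_isPreconnected (g := fun i z => a i * μ i ^ j * exp (μ i * z))
    (g' := fun i z => a i * μ i ^ (j + 1) * exp (μ i * z)) (hs (j + 1)) isOpen_Ioi
    isPreconnected_Ioi (fun i z _ => ?_)
    (fun i z hz => abs_mul_pow_mul_exp_le (j + 1) (hμ i) (le_of_lt hz)) hy
    (summable_mul_pow_mul_exp hμ (hs j) hy.le) hy
  have h := ((hasDerivAt_id' z).const_mul (μ i)).exp.const_mul (a i * μ i ^ j)
  rw [mul_one] at h
  exact h.congr_deriv (by ring)

end ExpSeries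

lemma iteratedDeriv_eqOn_of_hasDerivAt {𝕜 F : Type*} [NontriviallyNormedField 𝕜]
    [NormedAddCommGroup F] [NormedSpace 𝕜 F] {U : Set 𝕜} (hU : IsOpen U) {g : 𝕜 → F}
    {f : ℕ → 𝕜 → F} (h0 : Set.EqOn g (f 0) U)
    (hf : ∀ j, ∀ y ∈ U, HasDerivAt (f j) (f (j + 1) y) y) (j : ℕ) :
    Set.EqOn (iteratedDeriv j g) (f j) U := by
  induction j with
  | zero => simpa using h0
  | succ j ih =>
    intro y hy
    have hev : iteratedDeriv j g =ᶠ[𝓝 y] f j :=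
      Filter.eventuallyEq_of_mem (hU.mem_nhds hy) ih
    rw [iteratedDeriv_succ, hev.deriv_eq]
    exact (hf j y hy).deriv

noncomputable def binomPoly (k : ℕ) : ℝ[X] :=
  C ((k.factorial : ℝ)⁻¹) * descPochhammer ℝ k

lemma eval_binomPoly (k : ℕ) (y : ℝ) : (binomPoly k).eval y = binomR y k := by
  simp [binomPoly, binomR, descPochhammer_eval_eq_prod_range, div_eq_inv_mul]

lemma natDegree_binomPoly_le (k : ℕ) : (binomPoly k).natDegree ≤ k :=
  (natDegree_C_mul_le _ _).trans (descPochhammer_natDegree ℝ k).le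

/- `p = (n, k)` stands for the paper's summation indices `n + 1` and `k + 1`. -/
noncomputable def logSeriesCoeff (q : ℝ) (m : ℕ) (p : ℕ × ℕ) : ℝ :=
  ((p.1 + 1 + m - 2).choose (m - 1) : ℝ) * exp (log q * (((p.1 : ℝ) + 1) * ((p.2 : ℝ) + 1))) /
    ((p.2 : ℝ) + 1)

noncomputable def logSeriesRate (q : ℝ) (p : ℕ × ℕ) : ℝ := log q * ((p.2 : ℝ) + 1)

lemma logSeriesRate_nonpos {q : ℝ} (hq : 0 ≤ q) (hq1 : q ≤ 1) (p : ℕ × ℕ) :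
    logSeriesRate q p ≤ 0 :=
  mul_nonpos_of_nonpos_of_nonneg (log_nonpos hq hq1) (by positivity)

lemma summable_logSeries_majorant {q : ℝ} (hq : 0 < q) (hq1 : q < 1) {m : ℕ} (hm : 1 ≤ m)
    (j : ℕ) :
    Summable fun p => |logSeriesCoeff q m p| * |logSeriesRate q p| ^ j *
      exp (logSeriesRate q p * (-1 / 2)) := by
  have hL : log q < 0 := log_neg hq hq1
  have hn : Summable fun n : ℕ => ((n + 1 + m - 2).choose (m - 1) : ℝ) * exp (log q) ^ n := by
    have h := summable_choose_mul_geometric_of_norm_lt_one (m - 1) (r := exp (log q))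
      (by rw [norm_of_nonneg (exp_pos (log q)).le, exp_lt_one_iff]; exact hL)
    refine h.congr fun n => ?_
    rw [show n + (m - 1) = n + 1 + m - 2 by omega]
  have hk : Summable fun k : ℕ => ((k : ℝ) + 1) ^ j * exp (log q / 2) ^ (k + 1) := by
    have h := (summable_nat_add_iff 1).2 (summable_pow_mul_geometric_of_norm_lt_one j
      (r := exp (log q / 2)) (by rw [norm_of_nonneg (exp_pos _).le, exp_lt_one_iff]; linarith))
    simpa using h
  refine Summable.of_nonneg_of_le (fun p => by positivity) (fun ⟨n, k⟩ => ?_)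
    ((hn.mul_of_nonneg hk (fun n => by positivity) (fun k => by positivity)).mul_left
      (|log q| ^ j))
  have hnk : (0 : ℝ) ≤ n * k := by positivity
  have hexp : exp (log q * ((n + 1) * (k + 1))) * exp (log q * (k + 1) * (-1 / 2)) ≤
      exp (log q) ^ n * exp (log q / 2) ^ (k + 1) := by
    rw [← exp_nat_mul, ← exp_nat_mul, ← exp_add, ← exp_add, exp_le_exp]
    push_cast
    nlinarith
  simp only [logSeriesCoeff, logSeriesRate, abs_mul, abs_div, abs_exp, mul_pow, Nat.abs_cast,
    abs_of_pos (show (0 : ℝ) < k + 1 by positivity)]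
  calc _ = |log q| ^ j * ((n + 1 + m - 2).choose (m - 1) : ℝ) * ((k : ℝ) + 1) ^ j *
        (exp (log q * ((n + 1) * (k + 1))) * exp (log q * (k + 1) * (-1 / 2)) / (k + 1)) := by
          ring
    _ ≤ |log q| ^ j * ((n + 1 + m - 2).choose (m - 1) : ℝ) * ((k : ℝ) + 1) ^ j *
        (exp (log q) ^ n * exp (log q / 2) ^ (k + 1)) := by
      gcongr
      exact (div_le_self (by positivity) (by linarith [(k.cast_nonneg : (0 : ℝ) ≤ k)])).trans
        hexp
    _ = _ := by ring

lemma hasSum_logSeries_row {q : ℝ} (hq : 0 < q) (hq1 : q < 1) (m n : ℕ) {y : ℝ}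
    (hy : -1 < y) :
    HasSum (fun k => logSeriesCoeff q m (n, k) * exp (logSeriesRate q (n, k) * y))
      (-(((n + 1 + m - 2).choose (m - 1) : ℝ) * log (1 - q ^ (y + n + 1)))) := by
  have hpos : 0 < y + n + 1 := by linarith [(n.cast_nonneg : (0 : ℝ) ≤ n)]
  have ht : |q ^ (y + n + 1)| < 1 := by
    rw [abs_of_pos (rpow_pos_of_pos hq _)]; exact rpow_lt_one hq.le hq1 hpos
  have h := (hasSum_pow_div_log_of_abs_lt_one ht).mul_left
    ((n + 1 + m - 2).choose (m - 1) : ℝ)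
  rw [mul_neg] at h
  refine h.congr_fun fun k => ?_
  rw [rpow_def_of_pos hq, ← exp_nat_mul, logSeriesCoeff, logSeriesRate, div_mul_eq_mul_div,
    mul_assoc, ← exp_add, mul_div_assoc]
  push_cast
  ring_nf

lemma hasSum_choose_mul_log_one_sub_rpow {q : ℝ} (hq : 0 < q) (hq1 : q < 1) {m : ℕ}
    (hm : 1 ≤ m) {y : ℝ} (hy : -1 / 2 ≤ y) :
    HasSum (fun n : ℕ => ((n + 1 + m - 2).choose (m - 1) : ℝ) * log (1 - q ^ (y + n + 1)))
      (-∑' p, logSeriesCoeff q m p * exp (logSeriesRate q p * y)) := by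
  have hs : Summable fun p => logSeriesCoeff q m p * exp (logSeriesRate q p * y) := by
    simpa using summable_mul_pow_mul_exp (logSeriesRate_nonpos hq.le hq1.le)
      (summable_logSeries_majorant hq hq1 hm 0) hy
  simpa using (hs.hasSum.prod_fiberwise fun n => hasSum_logSeries_row hq hq1 m n
    (by linarith)).neg

lemma exists_logQG_eq_eval_add_tsum {q : ℝ} (hq : 0 < q) (hq1 : q < 1) {r : ℕ} (hr : 1 ≤ r) :
    ∃ P : ℝ[X], P.natDegree ≤ r ∧ ∀ y ∈ Set.Ioi (-1 / 2 : ℝ), logQG q r y =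
      P.eval y + (-1) ^ (r + 1) * ∑' p, logSeriesCoeff q r p * exp (logSeriesRate q p * y) := by
  set ℓ : ℕ → ℝ := fun m =>
    ∑' n : ℕ, ((n + 1 + m - 2).choose (m - 1) : ℝ) * log (1 - q ^ ((n : ℝ) + 1))
  have hℓ : ∀ m, 1 ≤ m → HasSum (fun n : ℕ =>
      ((n + 1 + m - 2).choose (m - 1) : ℝ) * log (1 - q ^ ((n : ℝ) + 1))) (ℓ m) := fun m hm =>
    (by simpa using (hasSum_choose_mul_log_one_sub_rpow hq hq1 hm (y := 0) (by norm_num)).summable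
      : Summable _).hasSum
  refine ⟨C (-log (1 - q)) * binomPoly r + C (-(-1) ^ r * ℓ r) +
    ∑ m ∈ Icc 1 (r - 1), C ((-1) ^ (m - 1) * ℓ m) * binomPoly (r - m), ?_, fun y hy => ?_⟩
  · refine natDegree_add_le_of_degree_le (natDegree_add_le_of_degree_le
      ((natDegree_C_mul_le _ _).trans (natDegree_binomPoly_le r))
      ((natDegree_C _).trans_le r.zero_le))
      (natDegree_sum_le_of_forall_le _ _ fun m _ => (natDegree_C_mul_le _ _).trans
        ((natDegree_binomPoly_le _).trans (Nat.sub_le _ _)))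
  have hy' : -1 / 2 < y := hy
  have hsum := ((hasSum_choose_mul_log_one_sub_rpow hq hq1 hr hy'.le).mul_left ((-1) ^ r)).sub
    ((hℓ r hr).mul_left ((-1) ^ r)) |>.add (hasSum_sum (s := Icc 1 (r - 1)) fun m hm =>
      (hℓ m (mem_Icc.1 hm).1).mul_left ((-1) ^ (m - 1) * binomR y (r - m)))
  rw [logQG, (hsum.congr_fun fun n => ?_).tsum_eq]
  · simp only [eval_add, eval_mul, eval_C, eval_finsetSum, eval_binomPoly]
    rw [sum_congr rfl fun m _ => mul_right_comm _ _ (binomR y (r - m))]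
    ring
  · have hpos : ∀ s : ℝ, 0 < s → 1 - q ^ s ≠ 0 := fun s hs =>
      (sub_pos.2 (rpow_lt_one hq.le hq1 hs)).ne'
    have hyn : 0 < y + n + 1 := by linarith [(n.cast_nonneg : (0 : ℝ) ≤ n)]
    rw [log_div (hpos _ hyn) (hpos _ n.cast_add_one_pos), qgR, sum_mul,
      sum_congr rfl fun m _ => mul_assoc ((-1) ^ (m - 1) * binomR y (r - m)) _ _]
    ring

lemma neg_one_pow_mul_logSeriesCoeff_mul_rate_pow {q : ℝ} (hq : 0 < q) (r n k : ℕ) (x : ℝ) :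
    (-1) ^ (r + 1) * (logSeriesCoeff q r (n, k) * logSeriesRate q (n, k) ^ (r + 1) *
      exp (logSeriesRate q (n, k) * x)) =
    (-log q) ^ (r + 1) * ((n + 1 + r - 2).choose (r - 1) * ((k : ℝ) + 1) ^ r *
      q ^ ((x + n + 1) * (k + 1))) := by
  have hk : (k : ℝ) + 1 ≠ 0 := k.cast_add_one_ne_zero
  rw [logSeriesCoeff, logSeriesRate, rpow_def_of_pos hq, show log q * ((x + n + 1) * (k + 1)) =
    log q * ((n + 1) * (k + 1)) + log q * (k + 1) * x by ring, exp_add, neg_pow, mul_pow]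
  field_simp
  ring

theorem stmt8 (q : ℝ) (hq : 0 < q) (hq1 : q < 1) (r : ℕ) (hr : 1 ≤ r) (x : ℝ) (hx : 0 ≤ x) :
    iteratedDeriv (r + 1) (logQG q r) x
        = (-Real.log q) ^ (r + 1) *
            ∑' n : ℕ, ∑' k : ℕ,
              (Nat.choose (n + 1 + r - 2) (r - 1) : ℝ) * ((k : ℝ) + 1) ^ r *
                q ^ ((x + n + 1) * (k + 1))
      ∧ 0 ≤ iteratedDeriv (r + 1) (logQG q r) x := by
  obtain ⟨P, hPdeg, hP⟩ := exists_logQG_eq_eval_add_tsum hq hq1 hr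
  have hμ := logSeriesRate_nonpos hq.le hq1.le
  have hs := summable_logSeries_majorant hq hq1 hr
  set f : ℕ → ℝ → ℝ := fun j y => (derivative^[j] P).eval y + (-1) ^ (r + 1) *
    ∑' p, logSeriesCoeff q r p * logSeriesRate q p ^ j * exp (logSeriesRate q p * y)
  have hx' : x ∈ Set.Ioi (-1 / 2 : ℝ) := Set.mem_Ioi.2 (by linarith)
  have hderiv : iteratedDeriv (r + 1) (logQG q r) x = f (r + 1) x := by
    refine iteratedDeriv_eqOn_of_hasDerivAt isOpen_Ioi (fun y hy => by simpa [f] using hP y hy)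
      (fun j y hy => ?_) (r + 1) hx'
    simp only [f, Function.iterate_succ_apply']
    exact (Polynomial.hasDerivAt _ y).add
      ((hasDerivAt_tsum_mul_pow_mul_exp hμ hs j hy).const_mul _)
  have hsum := (summable_mul_pow_mul_exp hμ (hs (r + 1)) hx'.le).mul_left ((-1) ^ (r + 1))
  simp only [neg_one_pow_mul_logSeriesCoeff_mul_rate_pow hq] at hsum
  have hformula : f (r + 1) x = (-log q) ^ (r + 1) * ∑' n : ℕ, ∑' k : ℕ,
      ((n + 1 + r - 2).choose (r - 1) : ℝ) * ((k : ℝ) + 1) ^ r *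
        q ^ ((x + n + 1) * (k + 1)) := by
    simp only [f, iterate_derivative_eq_zero (hPdeg.trans_lt r.lt_succ_self), eval_zero,
      zero_add, ← tsum_mul_left, neg_one_pow_mul_logSeriesCoeff_mul_rate_pow hq]
    rw [hsum.tsum_prod]
  refine ⟨hderiv.trans hformula, hderiv.trans hformula ▸ mul_nonneg ?_ ?_⟩
  · exact pow_nonneg (neg_nonneg.2 (log_nonpos hq.le hq1.le)) _
  · exact tsum_nonneg fun n => tsum_nonneg fun k =>
      mul_nonneg (by positivity) (rpow_nonneg hq.le _)
end

section
/- Let f : [0,∞) → ℝ be (k times differentiable with) f^{(k)}(x) → 0 as x → ∞, and suppose g : [0,∞) → ℝ satisfies g(x+1) - g(x) = f(x) for all x ≥ 0 together with another function h satisfying h(x+1) - h(x) = f(x) and g(0) = h(0). If additionally g - h is k times differentiable with (g-h)^{(k)} → 0 at infinity and g - h is periodic with period 1, then g = h. (Uniqueness part of the Dufresnoy–Pisot theorem: a function satisfying the difference equation f(x+1)-f(x)=g(x) with prescribed value at 0 and k-th derivative tending to 0 is unique.) -/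
/-!
The difference `ψ = f₁ - f₂` is `1`-periodic on `(0, ∞)` and `ψ⁽ᵏ⁾ → 0`. A periodic function
with a limit at infinity is constant (equal to its limit), so by induction on `k` it suffices to
see that if `ψ'` is constant then `ψ` is: by the mean value theorem `ψ'` vanishes somewhere in
each period interval. Hence `ψ` is constant on `(0, ∞)`, and `ψ 1 = ψ 0` extends this to `0`.
-/

open Filter Topology

variable {ψ : ℝ → ℝ} {a p : ℝ}

lemma eqOn_zero_of_add_period_eq_of_tendsto_atTop (hp : 0 < p)
    (hper : ∀ x ∈ Set.Ioi a, ψ (x + p) = ψ x) (hlim : Tendsto ψ atTop (𝓝 0)) :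
    Set.EqOn ψ 0 (Set.Ioi a) := by
  intro x hx
  have hiter : ∀ n : ℕ, ψ (x + n * p) = ψ x := by
    intro n
    induction n with
    | zero => simp
    | succ n ih =>
      have hxn : x + n * p ∈ Set.Ioi a :=
        lt_add_of_lt_of_nonneg hx (mul_nonneg n.cast_nonneg hp.le)
      rw [Nat.cast_succ, add_one_mul, ← add_assoc, hper _ hxn, ih]
  have hto : Tendsto (fun n : ℕ => x + n * p) atTop atTop :=
    tendsto_atTop_add_const_left _ x (tendsto_natCast_atTop_atTop.atTop_mul_const hp)
  exact tendsto_nhds_unique tendsto_const_nhds ((hlim.comp hto).congr hiter)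

lemma deriv_add_period_eq (hper : ∀ x ∈ Set.Ioi a, ψ (x + p) = ψ x) :
    ∀ x ∈ Set.Ioi a, deriv ψ (x + p) = deriv ψ x := by
  intro x hx
  have heq : (fun z => ψ (z + p)) =ᶠ[𝓝 x] ψ :=
    eventually_of_mem (Ioi_mem_nhds hx) hper
  rw [← deriv_comp_add_const, heq.deriv_eq]

lemma deriv_eqOn_zero_of_add_period_eq_of_deriv_const (hp : 0 < p) (hψ : Differentiable ℝ ψ)
    (hper : ∀ x ∈ Set.Ioi a, ψ (x + p) = ψ x)
    (hconst : ∀ x ∈ Set.Ioi a, ∀ y ∈ Set.Ioi a, deriv ψ x = deriv ψ y) :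
    Set.EqOn (deriv ψ) 0 (Set.Ioi a) := by
  intro x hx
  obtain ⟨c, hc, hslope⟩ := exists_deriv_eq_slope ψ (lt_add_of_pos_right x hp)
    hψ.continuous.continuousOn hψ.differentiableOn
  have hcx : c ∈ Set.Ioi a := lt_trans hx hc.1
  rw [hconst x hx c hcx, hslope, hper x hx, sub_self, zero_div, Pi.zero_apply]

theorem eq_of_add_period_eq_of_tendsto_iteratedDeriv (hp : 0 < p) (k : ℕ)
    (hψ : ContDiff ℝ k ψ) (hper : ∀ x ∈ Set.Ioi a, ψ (x + p) = ψ x)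
    (hlim : Tendsto (iteratedDeriv k ψ) atTop (𝓝 0)) :
    ∀ x ∈ Set.Ioi a, ∀ y ∈ Set.Ioi a, ψ x = ψ y := by
  induction k generalizing ψ with
  | zero =>
    have hzero := eqOn_zero_of_add_period_eq_of_tendsto_atTop hp hper (by simpa using hlim)
    exact fun x hx y hy => (hzero hx).trans (hzero hy).symm
  | succ k ih =>
    obtain ⟨hdiff, -, hderiv⟩ := (contDiff_succ_iff_deriv (n := k)).mp (by exact_mod_cast hψ)
    have hconst := ih hderiv (deriv_add_period_eq hper) (by rwa [iteratedDeriv_succ'] at hlim)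
    exact fun x hx y hy => isOpen_Ioi.is_const_of_deriv_eq_zero isPreconnected_Ioi
      hdiff.differentiableOn (deriv_eqOn_zero_of_add_period_eq_of_deriv_const hp hdiff hper hconst)
      hx hy

theorem stmt10_general (k : ℕ) (g f₁ f₂ : ℝ → ℝ)
    (h1 : ∀ x : ℝ, 0 ≤ x → f₁ (x + 1) - f₁ x = g x)
    (h2 : ∀ x : ℝ, 0 ≤ x → f₂ (x + 1) - f₂ x = g x)
    (h0 : f₁ 0 = f₂ 0)
    (hd1 : ContDiff ℝ k f₁) (hd2 : ContDiff ℝ k f₂)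
    (ht1 : Tendsto (iteratedDeriv k f₁) atTop (𝓝 0))
    (ht2 : Tendsto (iteratedDeriv k f₂) atTop (𝓝 0)) :
    ∀ x : ℝ, 0 ≤ x → f₁ x = f₂ x := by
  have hper : ∀ x ∈ Set.Ioi (0 : ℝ), (f₁ - f₂) (x + 1) = (f₁ - f₂) x := by
    intro x hx
    have := h1 x (le_of_lt hx)
    have := h2 x (le_of_lt hx)
    simp only [Pi.sub_apply]
    linarith
  have hlim : Tendsto (iteratedDeriv k (f₁ - f₂)) atTop (𝓝 0) := by
    simpa using (ht1.sub ht2).congr fun x => (iteratedDeriv_sub hd1.contDiffAt hd2.contDiffAt).symm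
  have hconst :=
    eq_of_add_period_eq_of_tendsto_iteratedDeriv one_pos k (hd1.sub hd2) hper hlim
  intro x hx
  rcases hx.eq_or_lt with rfl | hx
  · exact h0
  · have hx1 : f₁ x - f₂ x = f₁ 1 - f₂ 1 := hconst x hx 1 (Set.mem_Ioi.mpr one_pos)
    have h10 := h1 0 le_rfl
    have h20 := h2 0 le_rfl
    rw [zero_add] at h10 h20
    linarith

theorem stmt10 (k : ℕ) (g f₁ f₂ : ℝ → ℝ)
    (h1 : ∀ x : ℝ, 0 ≤ x → f₁ (x + 1) - f₁ x = g x)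
    (h2 : ∀ x : ℝ, 0 ≤ x → f₂ (x + 1) - f₂ x = g x)
    (h0 : f₁ 0 = f₂ 0)
    (hd1 : ContDiff ℝ k f₁) (hd2 : ContDiff ℝ k f₂)
    (ht1 : Tendsto (iteratedDeriv k f₁) atTop (𝓝 0))
    (ht2 : Tendsto (iteratedDeriv k f₂) atTop (𝓝 0))
    (hm1 : MonotoneOn (iteratedDeriv k f₁) (Set.Ici (0 : ℝ)))
    (hm2 : MonotoneOn (iteratedDeriv k f₂) (Set.Ici (0 : ℝ))) :
    ∀ x : ℝ, 0 ≤ x → f₁ x = f₂ x :=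
  stmt10_general k g f₁ f₂ h1 h2 h0 hd1 hd2 ht1 ht2
end

section
/- Let 0 < q < 1. For complex z with Re z > 0, Γ(z+1;q) = ∏_{n=1}^{∞} ( [n+1]/[n] )^z ( [z+n]/[n] )^{-1}, where [w] := (1-q^w)/(1-q) and Γ(z+1;q) := (1-q)^{-z} ∏_{n=1}^{∞} (1-q^n)/(1-q^{z+n}). -/
open Filter Topology

/-- The q-number `[w] = (1-q^w)/(1-q)`. -/
noncomputable def qnum (q : ℝ) (w : ℂ) : ℂ := (1 - (q : ℂ) ^ w) / (1 - (q : ℂ))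

/-- The q-gamma function: `qGammaF q z = Γ(z+1; q) = (1-q)^{-z} ∏_{n≥1} (1-q^n)/(1-q^{z+n})`. -/
noncomputable def qGammaF (q : ℝ) (z : ℂ) : ℂ :=
  (1 - (q : ℂ)) ^ (-z) * ∏' n : ℕ, (1 - (q : ℂ) ^ (n + 1)) / (1 - (q : ℂ) ^ (z + n + 1))

/-!
With `[w] = (1 - q^w)/(1 - q)`, the factor `([n+1]/[n])^z` equals `((1 - q^(n+1))/(1 - q^n))^z`,
whose product telescopes to `(1 - q)^(-z)`, and `([z+n]/[n])⁻¹ = (1 - q^n)/(1 - q^(z+n))` is the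
`n`-th factor of the product defining `Γ(z+1; q)`. Both products converge since `|q^(z+n)|` and
`q^n` are summable, so the product of the factorwise products is the product of the two products.
-/

theorem Monotone.hasSum_sub_of_tendsto {b : ℕ → ℝ} {B : ℝ} (hb : Monotone b)
    (hB : Tendsto b atTop (𝓝 B)) : HasSum (fun n ↦ b (n + 1) - b n) (B - b 0) := by
  refine (hasSum_iff_tendsto_nat_of_nonneg (fun n ↦ sub_nonneg.2 (hb n.le_succ)) _).2 ?_
  simpa only [Finset.sum_range_sub] using hB.sub_const (b 0)

theorem Complex.ofReal_cpow_eq_exp_log_mul {x : ℝ} (hx : 0 < x) (z : ℂ) :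
    (x : ℂ) ^ z = exp (Real.log x * z) := by
  rw [cpow_def_of_ne_zero (ofReal_ne_zero.2 hx.ne'), ofReal_log hx.le]

/-- The partial products telescope to `(a N / a 0) ^ z`; monotonicity makes the logarithms of
the factors nonnegative, which upgrades this to unconditional convergence. -/
theorem Monotone.hasProd_ofReal_succ_div_cpow {a : ℕ → ℝ} {L : ℝ} (ha : ∀ n, 0 < a n)
    (hmono : Monotone a) (hL : Tendsto a atTop (𝓝 L)) (z : ℂ) :
    HasProd (fun n ↦ ((a (n + 1) / a n : ℝ) : ℂ) ^ z) ((L : ℂ) ^ z / (a 0 : ℂ) ^ z) := by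
  have hL0 : 0 < L := (ha 0).trans_le (hmono.ge_of_tendsto hL 0)
  have hlog : HasSum (fun n ↦ Real.log (a (n + 1)) - Real.log (a n))
      (Real.log L - Real.log (a 0)) :=
    Monotone.hasSum_sub_of_tendsto (fun m n h ↦ Real.log_le_log (ha m) (hmono h))
      (hL.log hL0.ne')
  convert ((Complex.hasSum_ofReal.2 hlog).mul_right z).cexp using 1
  · ext n
    rw [Function.comp_apply, Complex.ofReal_cpow_eq_exp_log_mul (div_pos (ha _) (ha n)),
      Real.log_div (ha _).ne' (ha n).ne']
  · rw [Complex.ofReal_cpow_eq_exp_log_mul hL0, Complex.ofReal_cpow_eq_exp_log_mul (ha 0),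
      ← Complex.exp_sub, ← sub_mul, Complex.ofReal_sub]

theorem multipliable_one_sub_div_one_sub {ι 𝕜 : Type*} [NormedField 𝕜] [CompleteSpace 𝕜]
    {f g : ι → 𝕜} (hf : Summable (‖f ·‖)) (hg : Summable (‖g ·‖)) (hg1 : ∀ i, g i ≠ 1) :
    Multipliable fun i ↦ (1 - f i) / (1 - g i) := by
  have hf' : Summable (‖-f ·‖) := by simpa only [norm_neg] using hf
  have hg' : Summable (‖-g ·‖) := by simpa only [norm_neg] using hg
  have hg0 : ∀ i, 1 + -g i ≠ 0 := fun i ↦ by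
    rw [← sub_eq_add_neg, sub_ne_zero]; exact (hg1 i).symm
  simp only [sub_eq_add_neg]
  exact (multipliable_one_add_of_summable hf').div₀ (multipliable_one_add_of_summable hg')
    (tprod_one_add_ne_zero_of_summable hg0 hg')

section Powers

variable {q : ℝ}

theorem ofReal_cpow_ne_one (hq : 0 < q) (hq1 : q < 1) {w : ℂ} (hw : 0 < w.re) :
    (q : ℂ) ^ w ≠ 1 := by
  intro h
  have := Complex.norm_cpow_eq_rpow_re_of_pos hq w
  rw [h, norm_one] at this
  exact (Real.rpow_lt_one hq.le hq1 hw).ne this.symm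

theorem summable_norm_ofReal_cpow_add_nat (hq : 0 < q) (hq1 : q < 1) (z : ℂ) :
    Summable fun n : ℕ ↦ ‖(q : ℂ) ^ (z + n + 1)‖ := by
  have h : ∀ n : ℕ, ‖(q : ℂ) ^ (z + n + 1)‖ = q ^ (z.re + 1) * q ^ n := fun n ↦ by
    rw [Complex.norm_cpow_eq_rpow_re_of_pos hq, ← Real.rpow_natCast, ← Real.rpow_add hq]
    simp only [Complex.add_re, Complex.natCast_re, Complex.one_re]
    ring_nf
  simpa only [h] using (summable_geometric_of_lt_one hq.le hq1).mul_left _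

theorem summable_norm_ofReal_pow_succ (hq : 0 < q) (hq1 : q < 1) :
    Summable fun n : ℕ ↦ ‖(q : ℂ) ^ (n + 1)‖ := by
  have h : ∀ n : ℕ, ‖(q : ℂ) ^ (n + 1)‖ = q * q ^ n := fun n ↦ by
    rw [norm_pow, Complex.norm_real, Real.norm_of_nonneg hq.le, pow_succ']
  simpa only [h] using (summable_geometric_of_lt_one hq.le hq1).mul_left _

theorem qnum_div_qnum (hq1 : q ≠ 1) (w w' : ℂ) :
    qnum q w / qnum q w' = (1 - (q : ℂ) ^ w) / (1 - (q : ℂ) ^ w') :=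
  div_div_div_cancel_right₀ (sub_ne_zero.2 (by exact_mod_cast hq1.symm)) _ _

theorem qnum_ratio_cpow_mul_inv_eq (hq1 : q ≠ 1) (z : ℂ) (n : ℕ) :
    (qnum q ((n : ℂ) + 2) / qnum q ((n : ℂ) + 1)) ^ z *
        (qnum q (z + n + 1) / qnum q ((n : ℂ) + 1))⁻¹ =
      (((1 - q ^ (n + 2)) / (1 - q ^ (n + 1)) : ℝ) : ℂ) ^ z *
        ((1 - (q : ℂ) ^ (n + 1)) / (1 - (q : ℂ) ^ (z + n + 1))) := by
  have hcast : ∀ k : ℕ, (k : ℂ) + 1 = ((k + 1 : ℕ) : ℂ) := fun k ↦ by push_cast; ring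
  rw [inv_div, qnum_div_qnum hq1, qnum_div_qnum hq1,
    show (n : ℂ) + 2 = (n + 1 : ℕ) + 1 by push_cast; ring, hcast, hcast, Complex.cpow_natCast,
    Complex.cpow_natCast]
  push_cast
  ring_nf

end Powers

theorem stmt12 (q : ℝ) (hq : 0 < q) (hq1 : q < 1) (z : ℂ) (hz : 0 < z.re) :
    qGammaF q z
      = ∏' n : ℕ, ((qnum q ((n : ℂ) + 2) / qnum q ((n : ℂ) + 1)) ^ z *
          (qnum q (z + n + 1) / qnum q ((n : ℂ) + 1))⁻¹) := by
  set a : ℕ → ℝ := fun n ↦ 1 - q ^ (n + 1)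
  have ha_pos : ∀ n, 0 < a n := fun n ↦ sub_pos.2 (pow_lt_one₀ hq.le hq1 n.succ_ne_zero)
  have ha_mono : Monotone a := fun m n h ↦
    sub_le_sub_left (pow_le_pow_of_le_one hq.le hq1.le (by omega)) 1
  have ha_lim : Tendsto a atTop (𝓝 1) := by
    simpa using ((tendsto_pow_atTop_nhds_zero_of_lt_one hq.le hq1).comp
      (tendsto_add_atTop_nat 1)).const_sub 1
  have hprod_a := Monotone.hasProd_ofReal_succ_div_cpow ha_pos ha_mono ha_lim z
  have hre : ∀ n : ℕ, 0 < (z + n + 1).re := fun n ↦ by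
    simp only [Complex.add_re, Complex.natCast_re, Complex.one_re]
    positivity
  have hmult : Multipliable fun n : ℕ ↦ (1 - (q : ℂ) ^ (n + 1)) / (1 - (q : ℂ) ^ (z + n + 1)) :=
    multipliable_one_sub_div_one_sub (summable_norm_ofReal_pow_succ hq hq1)
      (summable_norm_ofReal_cpow_add_nat hq hq1 z) (fun n ↦ ofReal_cpow_ne_one hq hq1 (hre n))
  rw [tprod_congr fun n ↦ qnum_ratio_cpow_mul_inv_eq hq1.ne z n,
    (hprod_a.mul hmult.hasProd).tprod_eq, qGammaF]
  congr 1
  simp [a, Complex.cpow_neg]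
end

section
/- Let 0 < q < 1. For real x ≥ 0, the second derivative of x ↦ log Γ(x+1;q) is nonnegative, where Γ(z+1;q) := (1-q)^{-z} ∏_{n=1}^{∞} (1-q^n)/(1-q^{z+n}). -/
open Filter Topology

/-- Real q-gamma function `Γ(x+1; q) = (1-q)^{-x} ∏_{n≥1} (1-q^n)/(1-q^{x+n})`. -/
noncomputable def qGammaR (q : ℝ) (x : ℝ) : ℝ :=
  (1 - q) ^ (-x) * ∏' n : ℕ, (1 - q ^ ((n : ℝ) + 1)) / (1 - q ^ (x + n + 1))

/-! Taking logarithms turns the product into the series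
`-t log (1 - q) + ∑ₙ (log (1 - q^(n+1)) - log (1 - q^(t+n+1)))`. On every half-line
`t > c > -1` the termwise first and second derivatives, `log q · q^u / (1 - q^u)` and
`(log q)² q^u / (1 - q^u)²` at `u = t + n + 1`, are dominated by a multiple of `qⁿ`, so the
series may be differentiated twice termwise, and the second derivative is a sum of nonnegative
terms. -/

open Set

section

variable {q u : ℝ}

lemma hasDerivAt_neg_log_one_sub_rpow (hq : 0 < q) (hu : q ^ u ≠ 1) :
    HasDerivAt (fun u => -Real.log (1 - q ^ u)) (Real.log q * q ^ u / (1 - q ^ u)) u := by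
  have hne : 1 - q ^ u ≠ 0 := sub_ne_zero.2 hu.symm
  have hpow := (Real.hasStrictDerivAt_const_rpow hq u).hasDerivAt
  refine ((hpow.const_sub 1).log hne).neg.congr_deriv ?_
  ring

lemma hasDerivAt_log_mul_rpow_div_one_sub_rpow (hq : 0 < q) (hu : q ^ u ≠ 1) :
    HasDerivAt (fun u => Real.log q * q ^ u / (1 - q ^ u))
      (Real.log q ^ 2 * q ^ u / (1 - q ^ u) ^ 2) u := by
  have hne : 1 - q ^ u ≠ 0 := sub_ne_zero.2 hu.symm
  have hpow := (Real.hasStrictDerivAt_const_rpow hq u).hasDerivAt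
  refine ((hpow.const_mul (Real.log q)).div (hpow.const_sub 1) hne).congr_deriv ?_
  field_simp
  ring

variable {a : ℝ}

lemma abs_log_mul_rpow_div_one_sub_rpow_le (hq : 0 < q) (hq1 : q < 1) (ha : 0 < a)
    (hau : a ≤ u) :
    |Real.log q * q ^ u / (1 - q ^ u)| ≤ |Real.log q| / (1 - q ^ a) * q ^ u := by
  have hqa : q ^ a < 1 := Real.rpow_lt_one hq.le hq1 ha
  have hqu : q ^ u ≤ q ^ a := Real.rpow_le_rpow_of_exponent_ge hq hq1.le hau
  have hpos : 0 < q ^ u := Real.rpow_pos_of_pos hq u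
  rw [abs_div, abs_mul, abs_of_pos hpos, abs_of_pos (sub_pos.2 (hqu.trans_lt hqa)),
    div_mul_eq_mul_div]
  gcongr

lemma log_sq_mul_rpow_div_one_sub_rpow_sq_le (hq : 0 < q) (hq1 : q < 1) (ha : 0 < a)
    (hau : a ≤ u) :
    Real.log q ^ 2 * q ^ u / (1 - q ^ u) ^ 2 ≤ Real.log q ^ 2 / (1 - q ^ a) ^ 2 * q ^ u := by
  have hqa : q ^ a < 1 := Real.rpow_lt_one hq.le hq1 ha
  have hqu : q ^ u ≤ q ^ a := Real.rpow_le_rpow_of_exponent_ge hq hq1.le hau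
  rw [div_mul_eq_mul_div]
  gcongr

lemma rpow_add_natCast_add_one_le (hq : 0 < q) (hq1 : q ≤ 1) {c t : ℝ} (hct : c ≤ t)
    (n : ℕ) : q ^ (t + n + 1) ≤ q ^ (c + 1) * q ^ n := by
  calc q ^ (t + n + 1) ≤ q ^ (c + 1 + n) :=
        Real.rpow_le_rpow_of_exponent_ge hq hq1 (by linarith)
    _ = q ^ (c + 1) * q ^ n := by rw [Real.rpow_add hq, Real.rpow_natCast]

end

noncomputable def qGammaLogFactor (q : ℝ) (n : ℕ) (t : ℝ) : ℝ :=
  Real.log (1 - q ^ ((n : ℝ) + 1)) - Real.log (1 - q ^ (t + n + 1))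

section

variable {q t : ℝ}

lemma rpow_add_natCast_add_one_ne_one (hq : 0 < q) (hq1 : q < 1) (ht : -1 < t) (n : ℕ) :
    q ^ (t + (n + 1)) ≠ 1 :=
  (Real.rpow_lt_one hq.le hq1 (by linarith [n.cast_nonneg (α := ℝ)])).ne

lemma hasDerivAt_qGammaLogFactor (hq : 0 < q) (hq1 : q < 1) (ht : -1 < t) (n : ℕ) :
    HasDerivAt (qGammaLogFactor q n)
      (Real.log q * q ^ (t + n + 1) / (1 - q ^ (t + n + 1))) t := by
  have h := (hasDerivAt_neg_log_one_sub_rpow hq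
    (rpow_add_natCast_add_one_ne_one hq hq1 ht n)).comp_add_const t ((n : ℝ) + 1)
  have h' := h.const_add (Real.log (1 - q ^ ((n : ℝ) + 1)))
  simp only [← sub_eq_add_neg, ← add_assoc] at h'
  exact h'

lemma hasDerivAt_log_mul_rpow_div_one_sub_rpow_add (hq : 0 < q) (hq1 : q < 1) (ht : -1 < t)
    (n : ℕ) :
    HasDerivAt (fun t : ℝ => Real.log q * q ^ (t + n + 1) / (1 - q ^ (t + n + 1)))
      (Real.log q ^ 2 * q ^ (t + n + 1) / (1 - q ^ (t + n + 1)) ^ 2) t := by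
  simpa only [← add_assoc] using (hasDerivAt_log_mul_rpow_div_one_sub_rpow hq
    (rpow_add_natCast_add_one_ne_one hq hq1 ht n)).comp_add_const t ((n : ℝ) + 1)

end

section

variable {q c t : ℝ}

lemma norm_log_mul_rpow_div_one_sub_rpow_add_le (hq : 0 < q) (hq1 : q < 1) (hc : -1 < c)
    (hct : c ≤ t) (n : ℕ) :
    ‖Real.log q * q ^ (t + n + 1) / (1 - q ^ (t + n + 1))‖ ≤
      |Real.log q| / (1 - q ^ (c + 1)) * (q ^ (c + 1) * q ^ n) := by
  have hqc : q ^ (c + 1) < 1 := Real.rpow_lt_one hq.le hq1 (by linarith)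
  calc ‖Real.log q * q ^ (t + n + 1) / (1 - q ^ (t + n + 1))‖
      ≤ |Real.log q| / (1 - q ^ (c + 1)) * q ^ (t + n + 1) :=
        abs_log_mul_rpow_div_one_sub_rpow_le hq hq1 (by linarith)
          (by linarith [n.cast_nonneg (α := ℝ)])
    _ ≤ |Real.log q| / (1 - q ^ (c + 1)) * (q ^ (c + 1) * q ^ n) := by
        have : 0 < 1 - q ^ (c + 1) := by linarith
        gcongr
        exact rpow_add_natCast_add_one_le hq hq1.le hct n

lemma norm_log_sq_mul_rpow_div_one_sub_rpow_add_sq_le (hq : 0 < q) (hq1 : q < 1) (hc : -1 < c)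
    (hct : c ≤ t) (n : ℕ) :
    ‖Real.log q ^ 2 * q ^ (t + n + 1) / (1 - q ^ (t + n + 1)) ^ 2‖ ≤
      Real.log q ^ 2 / (1 - q ^ (c + 1)) ^ 2 * (q ^ (c + 1) * q ^ n) := by
  have hpos : 0 < q ^ (t + n + 1) := Real.rpow_pos_of_pos hq _
  calc ‖Real.log q ^ 2 * q ^ (t + n + 1) / (1 - q ^ (t + n + 1)) ^ 2‖
      = Real.log q ^ 2 * q ^ (t + n + 1) / (1 - q ^ (t + n + 1)) ^ 2 :=
        Real.norm_of_nonneg (by positivity)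
    _ ≤ Real.log q ^ 2 / (1 - q ^ (c + 1)) ^ 2 * q ^ (t + n + 1) :=
        log_sq_mul_rpow_div_one_sub_rpow_sq_le hq hq1 (by linarith)
          (by linarith [n.cast_nonneg (α := ℝ)])
    _ ≤ Real.log q ^ 2 / (1 - q ^ (c + 1)) ^ 2 * (q ^ (c + 1) * q ^ n) := by
        gcongr
        exact rpow_add_natCast_add_one_le hq hq1.le hct n

lemma summable_const_mul_rpow_mul_geometric (hq : 0 < q) (hq1 : q < 1) (K c : ℝ) :
    Summable fun n : ℕ => K * (q ^ c * q ^ n) :=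
  ((summable_geometric_of_lt_one hq.le hq1).mul_left _).mul_left K

-- The series vanishes at `t = 0` and its derivative series converges uniformly near `[0, t]`.
lemma summable_qGammaLogFactor (hq : 0 < q) (hq1 : q < 1) (ht : -1 < t) :
    Summable fun n => qGammaLogFactor q n t := by
  obtain ⟨c, hc, hct⟩ := exists_between (lt_min ht neg_one_lt_zero)
  exact summable_of_summable_hasDerivAt_of_isPreconnected
    (summable_const_mul_rpow_mul_geometric hq hq1 _ _) isOpen_Ioi isPreconnected_Ioi
    (fun n y hy => hasDerivAt_qGammaLogFactor hq hq1 (hc.trans hy) n)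
    (fun n y hy => norm_log_mul_rpow_div_one_sub_rpow_add_le hq hq1 hc (le_of_lt hy) n)
    (lt_min_iff.1 hct).2 (by simp [qGammaLogFactor]) (lt_min_iff.1 hct).1

lemma hasDerivAt_tsum_qGammaLogFactor (hq : 0 < q) (hq1 : q < 1) (ht : -1 < t) :
    HasDerivAt (fun t => ∑' n, qGammaLogFactor q n t)
      (∑' n : ℕ, Real.log q * q ^ (t + n + 1) / (1 - q ^ (t + n + 1))) t := by
  obtain ⟨c, hc, hct⟩ := exists_between (lt_min ht neg_one_lt_zero)
  exact hasDerivAt_tsum_of_isPreconnected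
    (summable_const_mul_rpow_mul_geometric hq hq1 _ _) isOpen_Ioi isPreconnected_Ioi
    (fun n y hy => hasDerivAt_qGammaLogFactor hq hq1 (hc.trans hy) n)
    (fun n y hy => norm_log_mul_rpow_div_one_sub_rpow_add_le hq hq1 hc (le_of_lt hy) n)
    (lt_min_iff.1 hct).2 (by simp [qGammaLogFactor]) (lt_min_iff.1 hct).1

lemma hasDerivAt_tsum_log_mul_rpow_div_one_sub_rpow (hq : 0 < q) (hq1 : q < 1) (ht : -1 < t) :
    HasDerivAt (fun t : ℝ => ∑' n : ℕ, Real.log q * q ^ (t + n + 1) / (1 - q ^ (t + n + 1)))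
      (∑' n : ℕ, Real.log q ^ 2 * q ^ (t + n + 1) / (1 - q ^ (t + n + 1)) ^ 2) t := by
  obtain ⟨c, hc, hct⟩ := exists_between ht
  exact hasDerivAt_tsum_of_isPreconnected
    (summable_const_mul_rpow_mul_geometric hq hq1 _ _) isOpen_Ioi isPreconnected_Ioi
    (fun n y hy => hasDerivAt_log_mul_rpow_div_one_sub_rpow_add hq hq1 (hc.trans hy) n)
    (fun n y hy => norm_log_sq_mul_rpow_div_one_sub_rpow_add_sq_le hq hq1 hc (le_of_lt hy) n)
    hct (.of_norm_bounded (summable_const_mul_rpow_mul_geometric hq hq1 _ _)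
      (norm_log_mul_rpow_div_one_sub_rpow_add_le hq hq1 hc hct.le)) hct

lemma log_qGammaR_eq (hq : 0 < q) (hq1 : q < 1) (ht : -1 < t) :
    Real.log (qGammaR q t) = -t * Real.log (1 - q) + ∑' n, qGammaLogFactor q n t := by
  have hfactor : Real.exp ∘ (qGammaLogFactor q · t) =
      fun n : ℕ => (1 - q ^ ((n : ℝ) + 1)) / (1 - q ^ (t + n + 1)) := by
    funext n
    have h1 : q ^ ((n : ℝ) + 1) < 1 := Real.rpow_lt_one hq.le hq1 (by positivity)
    have h2 : q ^ (t + n + 1) < 1 :=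
      Real.rpow_lt_one hq.le hq1 (by linarith [n.cast_nonneg (α := ℝ)])
    simp only [Function.comp, qGammaLogFactor, Real.exp_sub,
      Real.exp_log (sub_pos.2 h1), Real.exp_log (sub_pos.2 h2)]
  have hprod := (summable_qGammaLogFactor hq hq1 ht).hasSum.rexp
  rw [hfactor] at hprod
  rw [qGammaR, hprod.tprod_eq, Real.log_mul (by positivity) (Real.exp_ne_zero _), Real.log_exp,
    Real.log_rpow (sub_pos.2 hq1)]

lemma iteratedDeriv_two_log_qGammaR (hq : 0 < q) (hq1 : q < 1) {x : ℝ} (hx : -1 < x) :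
    iteratedDeriv 2 (fun t => Real.log (qGammaR q t)) x =
      ∑' n : ℕ, Real.log q ^ 2 * q ^ (x + n + 1) / (1 - q ^ (x + n + 1)) ^ 2 := by
  have hU : Ioi (-1 : ℝ) ∈ 𝓝 x := Ioi_mem_nhds hx
  have hlog : (fun t => Real.log (qGammaR q t)) =ᶠ[𝓝 x]
      fun t => -t * Real.log (1 - q) + ∑' n, qGammaLogFactor q n t :=
    eventually_of_mem hU fun t ht => log_qGammaR_eq hq hq1 ht
  have hderiv : deriv (fun t => -t * Real.log (1 - q) + ∑' n, qGammaLogFactor q n t) =ᶠ[𝓝 x]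
      fun t => -Real.log (1 - q) +
        ∑' n : ℕ, Real.log q * q ^ (t + n + 1) / (1 - q ^ (t + n + 1)) :=
    eventually_of_mem hU fun t ht =>
      (((hasDerivAt_neg t).mul_const _).add
        (hasDerivAt_tsum_qGammaLogFactor hq hq1 ht)).deriv.trans (by ring)
  rw [iteratedDeriv_eq_iterate, Function.iterate_succ_apply, Function.iterate_one,
    (hlog.deriv.trans hderiv).deriv_eq,
    ((hasDerivAt_tsum_log_mul_rpow_div_one_sub_rpow hq hq1 hx).const_add _).deriv]

end

theorem stmt13 (q : ℝ) (hq : 0 < q) (hq1 : q < 1) (x : ℝ) (hx : 0 ≤ x) :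
    0 ≤ iteratedDeriv 2 (fun t : ℝ => Real.log (qGammaR q t)) x := by
  rw [iteratedDeriv_two_log_qGammaR hq hq1 (by linarith)]
  exact tsum_nonneg fun n => by positivity
end

section
/- Let 0 < q < 1, r ≥ 2, 1 ≤ m ≤ r, and z ∈ ℂ. Then ∏_{n=N+1}^{∞} (1-q^n)^{C(N-n, r-m) C(z,m)} → 1 as N → ∞; more precisely, |log ∏_{n=N+1}^{∞} (1-q^n)^{C(N-n,r-m)C(z,m)}| ≤ q^N · |C(z,m)|/((r-m)!(1-q)) · ∑_{n=1}^{∞} (n+r-m-1)(n+r-m-2)⋯(n+1)·n · q^n, which tends to 0. -/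
open Finset Filter Topology

/-!
Since `1 - q ^ n` is a positive real, each factor of the product is `exp` of
`C(-(j + 1), k) C(z, m) log (1 - q ^ (N + 1 + j))` with `k = r - m`, so the product is `exp` of
the series of these terms. Up to sign, `C(-(j + 1), k) = C(j + k, k)`, and
`|log (1 - q ^ n)| ≤ q ^ n / (1 - q)`; hence the series is dominated by `q ^ N` times the
convergent series `∑ C(j + k, k) q ^ j`, which does not depend on `N`. So it tends to `0` and the
product to `1`.
-/

theorem Real.abs_log_one_sub_le_div {x : ℝ} (hx0 : 0 ≤ x) (hx1 : x < 1) :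
    |Real.log (1 - x)| ≤ x / (1 - x) := by
  have hpos : 0 < 1 - x := by linarith
  have hlower := Real.one_sub_inv_le_log_of_pos hpos
  have hrw : 1 - (1 - x)⁻¹ = -(x / (1 - x)) := by field_simp; ring
  rw [abs_of_nonpos (Real.log_nonpos hpos.le (by linarith))]
  linarith

theorem Complex.norm_log_one_sub_pow_le {q : ℝ} (hq0 : 0 ≤ q) (hq1 : q < 1) {n : ℕ}
    (hn : n ≠ 0) : ‖Complex.log (1 - (q : ℂ) ^ n)‖ ≤ q ^ n / (1 - q) := by
  have hqn : q ^ n ≤ q := pow_le_of_le_one hq0 hq1.le hn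
  have hreal : 1 - (q : ℂ) ^ n = ((1 - q ^ n : ℝ) : ℂ) := by push_cast; ring
  rw [hreal, ← Complex.ofReal_log (by linarith), Complex.norm_real, Real.norm_eq_abs]
  calc |Real.log (1 - q ^ n)| ≤ q ^ n / (1 - q ^ n) :=
        Real.abs_log_one_sub_le_div (by positivity) (by linarith)
    _ ≤ q ^ n / (1 - q) := by gcongr

theorem norm_genBinom_neg {x : ℝ} (hx : 0 ≤ x) (k : ℕ) :
    ‖genBinom (-(x : ℂ)) k‖ = (∏ i ∈ range k, (x + i)) / k.factorial := by
  rw [genBinom, norm_div, norm_prod, Complex.norm_natCast]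
  congr 1
  refine prod_congr rfl fun i _ => ?_
  rw [show -(x : ℂ) - i = -((x + i : ℝ) : ℂ) by push_cast; ring, norm_neg, Complex.norm_real,
    Real.norm_of_nonneg (by positivity)]

theorem prod_range_natCast_add_one_add (n k : ℕ) :
    ∏ i ∈ range k, ((n : ℝ) + 1 + i) = k.factorial * (n + k).choose k := by
  rw [← Nat.cast_mul, ← Nat.ascFactorial_eq_factorial_mul_choose,
    Nat.ascFactorial_eq_prod_range]
  push_cast
  rfl

theorem norm_genBinom_sub_add_one_add (N j k : ℕ) :
    ‖genBinom ((N : ℂ) - ((N : ℂ) + 1 + j)) k‖ = (j + k).choose k := by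
  rw [show (N : ℂ) - ((N : ℂ) + 1 + j) = -(((j : ℝ) + 1 : ℝ) : ℂ) by push_cast; ring,
    norm_genBinom_neg (by positivity), prod_range_natCast_add_one_add]
  field_simp

theorem summable_prod_range_add_mul_geometric {q : ℝ} (hq0 : 0 ≤ q) (hq1 : q < 1) (k : ℕ) :
    Summable fun n : ℕ => (∏ i ∈ range k, ((n : ℝ) + 1 + i)) * q ^ (n + 1) := by
  have hq : ‖q‖ < 1 := by rwa [Real.norm_of_nonneg hq0]
  refine ((summable_choose_mul_geometric_of_norm_lt_one k hq).mul_left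
    (k.factorial * q)).congr fun n => ?_
  rw [prod_range_natCast_add_one_add]
  ring

section LogSeries

variable {q : ℝ} (hq0 : 0 ≤ q) (hq1 : q < 1) (k : ℕ) (w : ℂ)

include hq0 hq1

theorem norm_genBinom_mul_log_le (N j : ℕ) :
    ‖(genBinom ((N : ℂ) - ((N : ℂ) + 1 + j)) k * w) *
        Complex.log (1 - (q : ℂ) ^ (N + 1 + j))‖
      ≤ q ^ N * (‖w‖ / (k.factorial * (1 - q)) *
          ((∏ i ∈ range k, ((j : ℝ) + 1 + i)) * q ^ (j + 1))) := by
  rw [norm_mul, norm_mul, norm_genBinom_sub_add_one_add, prod_range_natCast_add_one_add]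
  calc ((j + k).choose k : ℝ) * ‖w‖ * ‖Complex.log (1 - (q : ℂ) ^ (N + 1 + j))‖
      ≤ (j + k).choose k * ‖w‖ * (q ^ (N + 1 + j) / (1 - q)) := by
        gcongr
        exact Complex.norm_log_one_sub_pow_le hq0 hq1 (by omega)
    _ = _ := by field_simp; ring

theorem norm_tsum_genBinom_mul_log_le (N : ℕ) :
    ‖∑' j : ℕ, (genBinom ((N : ℂ) - ((N : ℂ) + 1 + j)) k * w) *
        Complex.log (1 - (q : ℂ) ^ (N + 1 + j))‖
      ≤ q ^ N * (‖w‖ / (k.factorial * (1 - q)) *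
          ∑' n : ℕ, (∏ i ∈ range k, ((n : ℝ) + 1 + i)) * q ^ (n + 1)) :=
  tsum_of_norm_bounded
    (((summable_prod_range_add_mul_geometric hq0 hq1 k).hasSum.mul_left _).mul_left _)
    (norm_genBinom_mul_log_le hq0 hq1 k w N)

theorem summable_genBinom_mul_log (N : ℕ) :
    Summable fun j : ℕ => (genBinom ((N : ℂ) - ((N : ℂ) + 1 + j)) k * w) *
      Complex.log (1 - (q : ℂ) ^ (N + 1 + j)) :=
  .of_norm_bounded
    (((summable_prod_range_add_mul_geometric hq0 hq1 k).mul_left _).mul_left _)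
    (norm_genBinom_mul_log_le hq0 hq1 k w N)

end LogSeries

theorem tprod_cpow_eq_exp_tsum {ι : Type*} {u w : ι → ℂ} (hu : ∀ i, u i ≠ 0)
    (hs : Summable fun i => w i * Complex.log (u i)) :
    ∏' i, u i ^ w i = Complex.exp (∑' i, w i * Complex.log (u i)) := by
  refine HasProd.tprod_eq ?_
  convert hs.hasSum.cexp with i
  rw [Function.comp_apply, Complex.cpow_def_of_ne_zero (hu i), mul_comm]

theorem one_sub_ofReal_pow_ne_zero {q : ℝ} (hq0 : 0 ≤ q) (hq1 : q < 1) {n : ℕ}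
    (hn : n ≠ 0) : 1 - (q : ℂ) ^ n ≠ 0 := by
  rw [sub_ne_zero, ne_comm, ← Complex.ofReal_pow, ← Complex.ofReal_one, Ne, Complex.ofReal_inj]
  exact (pow_lt_one₀ hq0 hq1 hn).ne

theorem stmt15_general (q : ℝ) (hq : 0 < q) (hq1 : q < 1) (r m : ℕ) (z : ℂ) :
    (∀ N : ℕ,
        ‖∑' j : ℕ, (genBinom ((N : ℂ) - ((N : ℂ) + 1 + j)) (r - m) * genBinom z m) *
            Complex.log (1 - (q : ℂ) ^ (N + 1 + j))‖
          ≤ q ^ N * (‖genBinom z m‖ / ((Nat.factorial (r - m)) * (1 - q)) *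
              ∑' n : ℕ, (∏ i ∈ Finset.range (r - m), ((n : ℝ) + 1 + i)) * q ^ (n + 1)))
    ∧ Tendsto (fun N : ℕ => ∏' j : ℕ,
          (1 - (q : ℂ) ^ (N + 1 + j)) ^
            (genBinom ((N : ℂ) - ((N : ℂ) + 1 + j)) (r - m) * genBinom z m))
        atTop (𝓝 1) := by
  have hbound := norm_tsum_genBinom_mul_log_le hq.le hq1 (r - m) (genBinom z m)
  refine ⟨hbound, ?_⟩
  have hlog_to_zero := squeeze_zero_norm hbound <| by
    simpa using (tendsto_pow_atTop_nhds_zero_of_lt_one hq.le hq1).mul_const _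
  have hexp := (Complex.continuous_exp.tendsto 0).comp hlog_to_zero
  rw [Complex.exp_zero] at hexp
  refine hexp.congr fun N => (tprod_cpow_eq_exp_tsum (fun j => ?_) ?_).symm
  · exact one_sub_ofReal_pow_ne_zero hq.le hq1 (by omega)
  · exact summable_genBinom_mul_log hq.le hq1 _ _ N

theorem stmt15 (q : ℝ) (hq : 0 < q) (hq1 : q < 1) (r m : ℕ) (hr : 2 ≤ r)
    (hm1 : 1 ≤ m) (hmr : m ≤ r) (z : ℂ) :
    (∀ N : ℕ,
        ‖∑' j : ℕ, (genBinom ((N : ℂ) - ((N : ℂ) + 1 + j)) (r - m) * genBinom z m) *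
            Complex.log (1 - (q : ℂ) ^ (N + 1 + j))‖
          ≤ q ^ N * (‖genBinom z m‖ / ((Nat.factorial (r - m)) * (1 - q)) *
              ∑' n : ℕ, (∏ i ∈ Finset.range (r - m), ((n : ℝ) + 1 + i)) * q ^ (n + 1)))
    ∧ Tendsto (fun N : ℕ => ∏' j : ℕ,
          (1 - (q : ℂ) ^ (N + 1 + j)) ^
            (genBinom ((N : ℂ) - ((N : ℂ) + 1 + j)) (r - m) * genBinom z m))
        atTop (𝓝 1) :=
  stmt15_general q hq hq1 r m z
end
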